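/- arXiv:math/0502559 — 2 statements merged into one kernel-verified Lean document; each statement's English description precedes it below -/
import Mathlib

section
/- Fix β ∈ (−1,1) and ε′ > 0. Then, as Δ = 2−α → 0⁺, uniformly over λ with 0 < λ ≤ Δ/ε′ one has A(1−λ;α,β) = [(λ/Δ)^{1/(1−Δ)}·(1+β+λ/Δ) / (1+β+2λ/Δ)²]·(1 + R(λ,Δ)), where sup_{0<λ≤Δ/ε′} |R(λ,Δ)| / (Δ·log(1/Δ)) → 0 as Δ → 0⁺. -/
open Filter Set Topology Real

/-- ϱ = (2/(πα))·arctan(β·tan(πα/2)). -/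
noncomputable def varrho (α β : ℝ) : ℝ :=
  (2 / (Real.pi * α)) * Real.arctan (β * Real.tan (Real.pi * α / 2))

/-- The function A(φ;α,β) appearing in the integral representation of the stable density. -/
noncomputable def Afun (α β φ : ℝ) : ℝ :=
  (Real.cos (Real.pi * α * varrho α β / 2)) ^ (1 / (α - 1)) *
    (Real.cos (Real.pi * φ / 2) / Real.sin (Real.pi * α * (φ + varrho α β) / 2)) ^
      (α / (α - 1)) *
    (Real.cos ((Real.pi / 2) * (α * varrho α β + (α - 1) * φ)) / Real.cos (Real.pi * φ / 2))

/-! ### Auxiliary elementary estimates -/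

lemma aux_abs_log_sub_log_le {y b : ℝ} (hy : 0 < y) (hb : 0 < b) :
    |Real.log y - Real.log b| ≤ |y - b| / min y b := by
  rcases le_total y b with h | h
  · rw [abs_of_nonpos (by simpa using Real.log_le_log hy h), abs_of_nonpos (by linarith),
      min_eq_left h]
    have h1 : Real.log (b / y) ≤ b / y - 1 := Real.log_le_sub_one_of_pos (by positivity)
    rw [Real.log_div hb.ne' hy.ne'] at h1
    have : b / y - 1 = (b - y) / y := by field_simp
    rw [this] at h1
    have h2 : -(y-b)/y = (b-y)/y := by ring
    rw [h2]; linarith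
  · rw [abs_of_nonneg (by simpa using Real.log_le_log hb h), abs_of_nonneg (by linarith),
      min_eq_right h]
    have h1 : Real.log (y / b) ≤ y / b - 1 := Real.log_le_sub_one_of_pos (by positivity)
    rw [Real.log_div hy.ne' hb.ne'] at h1
    have : y / b - 1 = (y - b) / b := by field_simp
    rw [this] at h1
    linarith

lemma aux_neg_two_mul_le_log_one_sub {w : ℝ} (h0 : 0 ≤ w) (h1 : w ≤ 1/2) :
    -(2*w) ≤ Real.log (1 - w) := by
  have hpos : 0 < 1 - w := by linarith
  have h2 : Real.exp (-(2*w)) ≤ 1 - w := by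
    have := Real.add_one_le_exp (2*w)
    rw [Real.exp_neg, inv_le_iff_one_le_mul₀ (Real.exp_pos _)]
    nlinarith [Real.exp_pos (2*w)]
  calc -(2*w) = Real.log (Real.exp (-(2*w))) := (Real.log_exp _).symm
    _ ≤ Real.log (1 - w) := Real.log_le_log (Real.exp_pos _) h2

lemma aux_abs_log_sin_sub_log_le {z : ℝ} (hz : 0 < z) (hz1 : z ≤ 1) :
    |Real.log (Real.sin z) - Real.log z| ≤ z^2 := by
  have hs1 : Real.sin z ≤ z := (Real.sin_lt hz).le
  have hs2 : z - z^3/4 < Real.sin z := lt_of_le_of_lt (by nlinarith [pow_pos hz 3]) (Real.sin_gt_sub_cube hz)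
  have hz3 : z^3 ≤ z := by nlinarith [sq_nonneg z, mul_pos hz hz]
  have hsp : 0 < Real.sin z := by nlinarith
  have hub : Real.log (Real.sin z) - Real.log z ≤ 0 := by
    simpa using Real.log_le_log hsp hs1
  have hlb : Real.log (Real.sin z) - Real.log z ≥ -(z^2) := by
    have heq : Real.sin z / z ≥ 1 - z^2/4 := by
      rw [ge_iff_le, le_div_iff₀ hz]; nlinarith
    have h3 : Real.log (1 - z^2/4) ≤ Real.log (Real.sin z / z) :=
      Real.log_le_log (by nlinarith) heq
    have h4 : -(2*(z^2/4)) ≤ Real.log (1 - z^2/4) :=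
      aux_neg_two_mul_le_log_one_sub (by positivity) (by nlinarith)
    rw [Real.log_div hsp.ne' hz.ne'] at h3
    linarith
  rw [abs_le]; constructor <;> linarith

lemma aux_abs_log_cos_le {z : ℝ} (hz : |z| ≤ 1) : |Real.log (Real.cos z)| ≤ z^2 := by
  have h1 : 1 - z^2/2 ≤ Real.cos z := Real.one_sub_sq_div_two_le_cos
  have hz2 : z^2 ≤ 1 := by nlinarith [sq_abs z, abs_nonneg z]
  have hcp : 0 < Real.cos z := by nlinarith
  have hub : Real.log (Real.cos z) ≤ 0 :=
    Real.log_nonpos (by linarith) (Real.cos_le_one z)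
  have hlb : -(z^2) ≤ Real.log (Real.cos z) := by
    have h4 : -(2*(z^2/2)) ≤ Real.log (1 - z^2/2) :=
      aux_neg_two_mul_le_log_one_sub (by positivity) (by nlinarith)
    have h3 : Real.log (1 - z^2/2) ≤ Real.log (Real.cos z) :=
      Real.log_le_log (by nlinarith) h1
    linarith
  rw [abs_le]; constructor <;> linarith

lemma aux_abs_exp_sub_one_le (L : ℝ) : |Real.exp L - 1| ≤ |L| * Real.exp |L| := by
  rcases le_or_gt 0 L with h | h
  · rw [abs_of_nonneg h, abs_of_nonneg (by simpa using Real.one_le_exp h)]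
    have h1 : Real.exp (-L) ≥ 1 - L := by linarith [Real.add_one_le_exp (-L)]
    have h2 : Real.exp L * (1 - L) ≤ 1 := by
      calc Real.exp L * (1 - L) ≤ Real.exp L * Real.exp (-L) := by
            nlinarith [Real.exp_pos L]
        _ = 1 := by rw [← Real.exp_add]; simp
    nlinarith
  · rw [abs_of_neg h, abs_of_nonpos (by simpa using Real.exp_le_one_iff.mpr h.le)]
    have h1 : 1 - L ≤ Real.exp (-L) := by linarith [Real.add_one_le_exp (-L)]
    have h2 : L + 1 ≤ Real.exp L := Real.add_one_le_exp L
    have h3 : (1:ℝ) ≤ Real.exp (-L) := Real.one_le_exp (by linarith)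
    nlinarith

lemma aux_arctan_le_self {y : ℝ} (hy : 0 ≤ y) : Real.arctan y ≤ y := by
  rcases eq_or_lt_of_le hy with h | h
  · simp [← h]
  · have h1 : 0 < Real.arctan y := by
      have := Real.arctan_strictMono h
      simpa using this
    have h2 := Real.lt_tan h1 (Real.arctan_lt_pi_div_two y)
    rw [Real.tan_arctan] at h2
    exact h2.le

lemma aux_self_sub_cube_le_arctan {y : ℝ} (hy : 0 ≤ y) : y - y^3 ≤ Real.arctan y := by
  have key : MonotoneOn (fun y : ℝ => Real.arctan y - y + y^3) (Set.Ici 0) := by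
    apply monotoneOn_of_deriv_nonneg (convex_Ici 0)
    · exact ((Real.continuous_arctan.sub continuous_id).add (continuous_pow 3)).continuousOn
    · intro x _
      exact (((Real.differentiable_arctan x).sub (differentiable_id x)).add
        ((differentiable_pow 3) x)).differentiableWithinAt
    · intro x hx
      have hd : deriv (fun y : ℝ => Real.arctan y - y + y^3) x
          = 1 / (1 + x^2) - 1 + 3*x^2 := by
        rw [deriv_fun_add, deriv_fun_sub, Real.deriv_arctan, deriv_id'', deriv_pow_field]
        · norm_num
        · exact Real.differentiable_arctan x
        · exact differentiable_id x
        · exact (Real.differentiable_arctan x).sub (differentiable_id x)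
        · exact (differentiable_pow 3) x
      rw [hd]
      have h1 : (0:ℝ) < 1 + x^2 := by positivity
      have h2 : 1 / (1 + x^2) - 1 + 3*x^2 = (2*x^2 + 3*x^4)/(1+x^2) := by
        field_simp; ring
      rw [h2]
      positivity
  have := key (Set.self_mem_Ici) (Set.mem_Ici.mpr hy) hy
  simp only [Real.arctan_zero] at this
  nlinarith [this]

lemma aux_abs_arctan_sub_self (y : ℝ) : |Real.arctan y - y| ≤ |y|^3 := by
  rcases le_total 0 y with h | h
  · rw [abs_of_nonneg h, abs_of_nonpos (by linarith [aux_arctan_le_self h])]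
    linarith [aux_self_sub_cube_le_arctan h]
  · have h1 : 0 ≤ -y := by linarith
    rw [abs_of_nonpos h]
    have h2 := aux_arctan_le_self h1
    have h3 := aux_self_sub_cube_le_arctan h1
    rw [Real.arctan_neg] at h2 h3
    rw [abs_of_nonneg (by linarith)]
    nlinarith

lemma aux_abs_arctan_le (y : ℝ) : |Real.arctan y| ≤ |y| := by
  rcases le_total 0 y with h | h
  · rw [abs_of_nonneg h, abs_of_nonneg (by simpa using Real.arctan_strictMono.monotone h)]
    exact aux_arctan_le_self h
  · have h1 : 0 ≤ -y := by linarith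
    have h2 := aux_arctan_le_self h1
    rw [Real.arctan_neg] at h2
    rw [abs_of_nonpos h, abs_of_nonpos (by simpa using Real.arctan_strictMono.monotone h)]
    linarith

lemma aux_tan_le_self_add_cube {z : ℝ} (hz : 0 ≤ z) (hz1 : z ≤ 1) :
    Real.tan z ≤ z + z^3 := by
  rcases eq_or_lt_of_le hz with h | h
  · simp [← h]
  have hcos : Real.cos z ≥ 1/2 := by
    have := Real.one_sub_sq_div_two_le_cos (x := z)
    nlinarith
  have hsin : Real.sin z ≤ z := (Real.sin_lt h).le
  rw [Real.tan_eq_sin_div_cos, div_le_iff₀ (by linarith)]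
  have h2 : 1 - z^2/2 ≤ Real.cos z := Real.one_sub_sq_div_two_le_cos
  nlinarith [sq_nonneg z, pow_pos h 3]

lemma aux_self_le_tan {z : ℝ} (hz : 0 ≤ z) (hz1 : z ≤ 1) : z ≤ Real.tan z := by
  rcases eq_or_lt_of_le hz with h | h
  · simp [← h]
  · exact (Real.lt_tan h (by nlinarith [Real.pi_gt_three])).le

lemma aux_abs_sub_le (a b : ℝ) : |a - b| ≤ |a| + |b| := by
  simpa [sub_eq_add_neg, abs_neg] using abs_add_le a (-b)

lemma aux_abs_add7 (a b c d e f g : ℝ) :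
    |a + b - c + d - e + f + g| ≤ |a| + |b| + |c| + |d| + |e| + |f| + |g| := by
  have h1 := abs_add_le (a + b - c + d - e + f) g
  have h2 := abs_add_le (a + b - c + d - e) f
  have h3 := aux_abs_sub_le (a + b - c + d) e
  have h4 := abs_add_le (a + b - c) d
  have h5 := aux_abs_sub_le (a + b) c
  have h6 := abs_add_le a b
  linarith

/-- The structural rewriting of `Afun` near `α = 2`, `φ = 1`. -/
lemma Afun_eq_of_lt_one {Δ lam β : ℝ} (hΔ : 0 < Δ) (hΔ1 : Δ < 1) :
    Afun (2-Δ) β (1-lam) =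
      (Real.cos (Real.arctan (β * Real.tan (Real.pi*Δ/2)))) ^ (1/(1-Δ)) *
      (Real.sin (Real.pi*lam/2) /
        Real.sin (Real.pi*lam + Real.pi*Δ*(1-lam)/2 + Real.arctan (β * Real.tan (Real.pi*Δ/2))))
          ^ ((2-Δ)/(1-Δ)) *
      (Real.sin ((Real.pi/2)*(Δ + lam - Δ*lam) + Real.arctan (β * Real.tan (Real.pi*Δ/2))) /
        Real.sin (Real.pi*lam/2)) := by
  have hπ : Real.pi ≠ 0 := Real.pi_ne_zero
  have hα : (2-Δ) ≠ 0 := by linarith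
  set a := Real.arctan (β * Real.tan (Real.pi*Δ/2)) with ha
  have hϱ : varrho (2-Δ) β = -(2*a)/(Real.pi*(2-Δ)) := by
    rw [varrho, show Real.pi*(2-Δ)/2 = Real.pi - Real.pi*Δ/2 by ring, Real.tan_pi_sub,
      show β * -Real.tan (Real.pi*Δ/2) = -(β*Real.tan (Real.pi*Δ/2)) by ring, Real.arctan_neg,
      ← ha]
    field_simp
  have h1 : Real.pi * (2-Δ) * varrho (2-Δ) β / 2 = -a := by
    rw [hϱ]; field_simp
  have h2 : Real.pi * (2-Δ) * ((1-lam) + varrho (2-Δ) β) / 2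
      = Real.pi - (Real.pi*lam + Real.pi*Δ*(1-lam)/2 + a) := by
    rw [hϱ]; field_simp; ring
  have h3 : (Real.pi/2) * ((2-Δ)*varrho (2-Δ) β + ((2-Δ)-1)*(1-lam))
      = Real.pi/2 - ((Real.pi/2)*(Δ + lam - Δ*lam) + a) := by
    rw [hϱ]; field_simp; ring
  have h4 : Real.pi * (1-lam)/2 = Real.pi/2 - Real.pi*lam/2 := by ring
  rw [Afun, h1, h2, h3, h4, Real.cos_neg, Real.sin_pi_sub, Real.cos_pi_div_two_sub,
    Real.cos_pi_div_two_sub, show (2:ℝ)-Δ-1 = 1-Δ by ring]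

/-- The key quantitative estimate: the relative error is `O(Δ)` uniformly. -/
lemma key_estimate {β ε' : ℝ} (hβ1 : -1 < β) (hβ2 : β < 1) (hε' : 0 < ε') :
    ∃ C > (0:ℝ), ∃ Δ₁ > (0:ℝ), ∀ Δ lam : ℝ, 0 < Δ → Δ ≤ Δ₁ → 0 < lam → lam ≤ Δ / ε' →
      |Afun (2-Δ) β (1-lam) /
        ((lam / Δ) ^ (1 / (1 - Δ)) * (1 + β + lam / Δ) / (1 + β + 2 * lam / Δ) ^ 2) - 1|
        ≤ C * Δ := by
  obtain ⟨m, hm_def⟩ : ∃ w : ℝ, w = (1+β)/2 := ⟨_, rfl⟩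
  have hm : 0 < m := by rw [hm_def]; linarith
  have hm1 : m ≤ 1 := by rw [hm_def]; linarith
  obtain ⟨Cs, hCs_def⟩ : ∃ w : ℝ, w = 2/ε' + 25 := ⟨_, rfl⟩
  have hCs : 0 < Cs := by rw [hCs_def]; positivity
  have hCs1 : 1 ≤ Cs := by
    have : 0 < 2/ε' := by positivity
    rw [hCs_def]; linarith
  obtain ⟨Cls, hCls_def⟩ : ∃ w : ℝ, w = Real.log Cs - Real.log m := ⟨_, rfl⟩
  have hlogm : Real.log m ≤ 0 := Real.log_nonpos hm.le hm1
  have hlogCs : 0 ≤ Real.log Cs := Real.log_nonneg hCs1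
  have hCls : 0 ≤ Cls := by rw [hCls_def]; linarith
  obtain ⟨K, hK_def⟩ : ∃ w : ℝ, w = 32 + 8/ε'^2 + 16*Cs^2 + 2*Cls + (3/m)*(36 + 1/ε')
    := ⟨_, rfl⟩
  have hK : 0 < K := by
    have h1 : 0 < 8/ε'^2 := by positivity
    have h2 : 0 < 16*Cs^2 := by positivity
    have h3 : 0 < (3/m)*(36 + 1/ε') := by positivity
    rw [hK_def]; linarith
  refine ⟨3*K, by linarith, min (min (min (1/4) (ε'/2)) (min (1/(2*Cs)) (ε'*(1+β)/4)))
    (min ((1+β)/144) (1/K)), ?_, ?_⟩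
  · have hb0 : (0:ℝ) < 1 + β := by linarith
    apply lt_min
    · apply lt_min
      · apply lt_min <;> [norm_num; positivity]
      · apply lt_min
        · positivity
        · positivity
    · apply lt_min
      · linarith
      · positivity
  intro Δ lam hΔ hΔ₁ hlam hlamε
  have hΔ4 : Δ ≤ 1/4 := le_trans hΔ₁ ((min_le_left _ _).trans ((min_le_left _ _).trans (min_le_left _ _)))
  have hΔε : Δ ≤ ε'/2 := le_trans hΔ₁ ((min_le_left _ _).trans ((min_le_left _ _).trans (min_le_right _ _)))
  have hΔCs : Δ ≤ 1/(2*Cs) := le_trans hΔ₁ ((min_le_left _ _).trans ((min_le_right _ _).trans (min_le_left _ _)))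
  have hΔβε : Δ ≤ ε'*(1+β)/4 := le_trans hΔ₁ ((min_le_left _ _).trans ((min_le_right _ _).trans (min_le_right _ _)))
  have hΔβ : Δ ≤ (1+β)/144 := le_trans hΔ₁ ((min_le_right _ _).trans (min_le_left _ _))
  have hΔK : Δ ≤ 1/K := le_trans hΔ₁ ((min_le_right _ _).trans (min_le_right _ _))
  have hΔ1 : Δ < 1 := by linarith only [hΔ4]
  have hΔ2 : Δ^2 ≤ Δ := by nlinarith only [hΔ, hΔ1]
  have hπ4 : Real.pi ≤ 4 := Real.pi_le_four
  have hπ0 : 0 < Real.pi := Real.pi_pos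
  have hπ3 : 3 < Real.pi := Real.pi_gt_three
  have hlamε2 : lam * ε' ≤ Δ := (le_div_iff₀ hε').mp hlamε
  have hlamβ : lam ≤ (1+β)/4 := by
    have h1 : Δ/ε' ≤ (1+β)/4 := by
      rw [div_le_iff₀ hε']
      nlinarith only [hΔβε, hε', hβ1]
    linarith only [h1, hlamε]
  -- basic quantities
  obtain ⟨z, hz_def⟩ : ∃ w : ℝ, w = Real.pi * Δ / 2 := ⟨_, rfl⟩
  have hz0 : 0 < z := by rw [hz_def]; positivity
  have hz2Δ : z ≤ 2*Δ := by rw [hz_def]; nlinarith only [hπ4, hΔ]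
  have hz1 : z ≤ 1/2 := by linarith only [hz2Δ, hΔ4]
  obtain ⟨t, ht_def⟩ : ∃ w : ℝ, w = Real.tan z := ⟨_, rfl⟩
  have ht_lb : z ≤ t := by
    rw [ht_def]; exact aux_self_le_tan hz0.le (by linarith only [hz1])
  have htzcube : Real.tan z ≤ z + z^3 := aux_tan_le_self_add_cube hz0.le (by linarith only [hz1])
  have hzcube : z^3 ≤ z := by nlinarith only [hz0, hz1, sq_nonneg z]
  have ht_ub : t ≤ 2*z := by rw [ht_def]; linarith only [htzcube, hzcube]
  obtain ⟨a, ha_def⟩ : ∃ w : ℝ, w = Real.arctan (β * t) := ⟨_, rfl⟩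
  have hβabs : |β| ≤ 1 := by rw [abs_le]; constructor <;> linarith only [hβ1, hβ2]
  have ht0 : 0 < t := lt_of_lt_of_le hz0 ht_lb
  have habs : |a| ≤ 2*z := by
    rw [ha_def]
    calc |Real.arctan (β*t)| ≤ |β * t| := aux_abs_arctan_le _
      _ = |β| * t := by rw [abs_mul, abs_of_pos ht0]
      _ ≤ 1 * (2*z) := mul_le_mul hβabs ht_ub ht0.le zero_le_one
      _ = 2*z := by ring
  have habs1 : |a| ≤ 1 := le_trans habs (by linarith only [hz1])
  have haβz : |a - β * z| ≤ 9 * z^3 := by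
    have h1 : |a - β * t| ≤ |β*t|^3 := by rw [ha_def]; exact aux_abs_arctan_sub_self (β*t)
    have h2 : |β*t|^3 ≤ t^3 := by
      have h3 : |β*t| ≤ t := by
        rw [abs_mul, abs_of_pos ht0]
        nlinarith only [hβabs, ht0]
      exact pow_le_pow_left₀ (abs_nonneg _) h3 3
    have htz : t - z ≤ z^3 := by rw [ht_def]; linarith only [htzcube]
    have h5 : |β * t - β * z| ≤ z^3 := by
      rw [show β*t - β*z = β*(t-z) by ring, abs_mul,
        abs_of_nonneg (by linarith only [ht_lb] : (0:ℝ) ≤ t - z)]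
      nlinarith only [hβabs, htz, ht_lb, abs_nonneg β]
    have hcube : t^3 ≤ 8*z^3 := by
      have := pow_le_pow_left₀ ht0.le ht_ub 3
      nlinarith only [this]
    calc |a - β*z| = |(a - β*t) + (β*t - β*z)| := by ring_nf
      _ ≤ |a - β*t| + |β*t - β*z| := abs_add_le _ _
      _ ≤ t^3 + z^3 := by linarith only [h1, h2, h5]
      _ ≤ 9*z^3 := by linarith only [hcube]
  -- scaled variables
  obtain ⟨x, hx_def⟩ : ∃ w : ℝ, w = lam / Δ := ⟨_, rfl⟩
  have hx : 0 < x := by rw [hx_def]; positivity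
  have hx1 : x ≤ 1/ε' := by
    rw [hx_def, div_le_div_iff₀ hΔ hε']
    linarith only [hlamε2]
  have hΔx : Δ * x = lam := by rw [hx_def]; field_simp
  obtain ⟨c, hc_def⟩ : ∃ w : ℝ, w = a / z := ⟨_, rfl⟩
  have hzsq : z^2 ≤ 4*Δ^2 := by nlinarith only [hz0, hz2Δ]
  have hc : |c - β| ≤ 36 * Δ^2 := by
    have h1 : c - β = (a - β*z)/z := by rw [hc_def]; field_simp
    rw [h1, abs_div, abs_of_pos hz0, div_le_iff₀ hz0]
    calc |a - β*z| ≤ 9*z^3 := haβz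
      _ ≤ 36*Δ^2*z := by nlinarith only [mul_nonneg (sub_nonneg.2 hzsq) hz0.le]
  have hc36 : 36*Δ^2 ≤ (1+β)/4 := by
    have h36 : Δ*Δ ≤ Δ*(1/4) := mul_le_mul_of_nonneg_left hΔ4 hΔ.le
    nlinarith only [h36, hΔβ, hβ1]
  have hcub : c ≤ β + 36*Δ^2 := by linarith only [(abs_le.mp hc).2]
  have hclb : β - 36*Δ^2 ≤ c := by linarith only [(abs_le.mp hc).1]
  obtain ⟨s, hs_def⟩ : ∃ w : ℝ, w = 2*x + (1-lam) + c := ⟨_, rfl⟩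
  obtain ⟨τ, hτ_def⟩ : ∃ w : ℝ, w = 1 + x*(1-Δ) + c := ⟨_, rfl⟩
  have hxΔnn : 0 ≤ x*(1-Δ) := mul_nonneg hx.le (by linarith only [hΔ1])
  have hs_lb : m ≤ s := by
    rw [hs_def, hm_def]
    linarith only [hx, hlamβ, hclb, hc36, hβ1]
  have hs0 : 0 < s := lt_of_lt_of_le hm hs_lb
  have h2xε : 2*x ≤ 2*(1/ε') := by linarith only [hx1]
  have hs_ub : s ≤ Cs := by
    rw [hs_def, hCs_def]
    have h36d : 36*Δ^2 ≤ 9 := by nlinarith only [hΔ2, hΔ4]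
    have : 2*(1/ε') = 2/ε' := by ring
    linarith only [h2xε, hlam, hcub, h36d, hβ2, this]
  have hτ_lb : m ≤ τ := by
    rw [hτ_def, hm_def]
    linarith only [hxΔnn, hclb, hc36, hβ1]
  have hτ0 : 0 < τ := lt_of_lt_of_le hm hτ_lb
  have hτ_ub : τ ≤ Cs := by
    rw [hτ_def, hCs_def]
    have h36d : 36*Δ^2 ≤ 9 := by nlinarith only [hΔ2, hΔ4]
    have hxd : 0 ≤ x*Δ := mul_nonneg hx.le hΔ.le
    have hε2 : 0 ≤ 1/ε' := by positivity
    have hbr : 2/ε' = 2*(1/ε') := by ring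
    linarith only [h36d, hcub, hβ2, hx1, hxd, hε2, hbr]
  -- the three angles
  obtain ⟨u, hu_def⟩ : ∃ w : ℝ, w = Real.pi*lam/2 := ⟨_, rfl⟩
  have hu_eq : u = z*x := by
    rw [hu_def, hz_def, hx_def]; field_simp
  obtain ⟨S, hS_def⟩ : ∃ w : ℝ, w = Real.pi*lam + Real.pi*Δ*(1-lam)/2
      + Real.arctan (β * Real.tan (Real.pi*Δ/2)) := ⟨_, rfl⟩
  have hta : Real.arctan (β * Real.tan (Real.pi*Δ/2)) = a := by
    rw [ha_def, ht_def, hz_def]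
  have hzc : z * c = a := by rw [hc_def]; field_simp
  have hzs : z*s = Real.pi*lam + Real.pi*Δ*(1-lam)/2 + a := by
    rw [hs_def, mul_add, mul_add, hzc, hz_def, hx_def]
    field_simp
  have hS_eq : S = z*s := by rw [hS_def, hta, hzs]
  obtain ⟨T, hT_def⟩ : ∃ w : ℝ, w = (Real.pi/2)*(Δ + lam - Δ*lam)
      + Real.arctan (β * Real.tan (Real.pi*Δ/2)) := ⟨_, rfl⟩
  have hzτ : z*τ = (Real.pi/2)*(Δ + lam - Δ*lam) + a := by
    rw [hτ_def, mul_add, mul_add, hzc, hz_def, hx_def]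
    field_simp
    ring
  have hT_eq : T = z*τ := by rw [hT_def, hta, hzτ]
  have hu0 : 0 < u := by rw [hu_eq]; exact mul_pos hz0 hx
  have hu_ub : u ≤ 2*Δ*(1/ε') := by
    rw [hu_eq]
    calc z*x ≤ (2*Δ)*(1/ε') := mul_le_mul hz2Δ hx1 hx.le (by linarith only [hΔ])
      _ = 2*Δ*(1/ε') := by ring
  have hu1 : u ≤ 1 := by
    have h1 : 2*Δ*(1/ε') ≤ ε'*(1/ε') :=
      mul_le_mul_of_nonneg_right (by linarith only [hΔε]) (by positivity)
    have h2 : ε'*(1/ε') = 1 := by field_simp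
    linarith only [hu_ub, h1, h2]
  have hS0 : 0 < S := by rw [hS_eq]; exact mul_pos hz0 hs0
  have hS_ub : S ≤ 2*Δ*Cs := by
    rw [hS_eq]
    calc z*s ≤ (2*Δ)*Cs := mul_le_mul hz2Δ hs_ub hs0.le (by linarith only [hΔ])
      _ = 2*Δ*Cs := by ring
  have hS1 : S ≤ 1 := by
    have h1 : Δ*(2*Cs) ≤ (1/(2*Cs))*(2*Cs) :=
      mul_le_mul_of_nonneg_right hΔCs (by positivity)
    have h2 : (1/(2*Cs))*(2*Cs) = 1 := by field_simp
    nlinarith only [hS_ub, h1, h2]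
  have hT0 : 0 < T := by rw [hT_eq]; exact mul_pos hz0 hτ0
  have hT_ub : T ≤ 2*Δ*Cs := by
    rw [hT_eq]
    calc z*τ ≤ (2*Δ)*Cs := mul_le_mul hz2Δ hτ_ub hτ0.le (by linarith only [hΔ])
      _ = 2*Δ*Cs := by ring
  have hT1 : T ≤ 1 := by
    have h1 : Δ*(2*Cs) ≤ (1/(2*Cs))*(2*Cs) :=
      mul_le_mul_of_nonneg_right hΔCs (by positivity)
    have h2 : (1/(2*Cs))*(2*Cs) = 1 := by field_simp
    nlinarith only [hT_ub, h1, h2]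
  have hsinu : 0 < Real.sin u := Real.sin_pos_of_pos_of_lt_pi hu0 (by linarith only [hu1, hπ3])
  have hsinS : 0 < Real.sin S := Real.sin_pos_of_pos_of_lt_pi hS0 (by linarith only [hS1, hπ3])
  have hsinT : 0 < Real.sin T := Real.sin_pos_of_pos_of_lt_pi hT0 (by linarith only [hT1, hπ3])
  have hcosa : 0 < Real.cos a := by rw [ha_def]; exact Real.cos_arctan_pos _
  -- exponential form of Afun
  have hA : Afun (2-Δ) β (1-lam) = Real.exp (Real.log (Real.cos a) * (1/(1-Δ))
      + Real.log (Real.sin u / Real.sin S) * ((2-Δ)/(1-Δ))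
      + (Real.log (Real.sin T) - Real.log (Real.sin u))) := by
    rw [Afun_eq_of_lt_one hΔ hΔ1, ← hu_def, ← hS_def, ← hT_def, hta, Real.exp_add,
      Real.exp_add, Real.rpow_def_of_pos hcosa, Real.rpow_def_of_pos (div_pos hsinu hsinS),
      Real.exp_sub, Real.exp_log hsinT, Real.exp_log hsinu]
  have hb1 : (0:ℝ) < 1+β+x := by linarith only [hβ1, hx]
  have hb2 : (0:ℝ) < 1+β+2*x := by linarith only [hβ1, hx]
  have hM : (lam / Δ) ^ (1 / (1 - Δ)) * (1 + β + lam / Δ) / (1 + β + 2 * lam / Δ) ^ 2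
      = Real.exp (Real.log x * (1/(1-Δ))
        + (Real.log (1+β+x) - 2*Real.log (1+β+2*x))) := by
    rw [show 2 * lam / Δ = 2*(lam/Δ) by ring, ← hx_def]
    have hexp2 : Real.exp (2*Real.log (1+β+2*x)) = (1+β+2*x)^2 := by
      rw [show (2:ℝ)*Real.log (1+β+2*x) = Real.log (1+β+2*x) + Real.log (1+β+2*x) by ring,
        Real.exp_add, Real.exp_log hb2, sq]
    rw [Real.exp_add, Real.exp_sub, Real.rpow_def_of_pos hx, Real.exp_log hb1, hexp2]
    ring
  rw [hA, hM, ← Real.exp_sub]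
  -- error terms from the sine approximations
  obtain ⟨Eu, hEu_def⟩ : ∃ w : ℝ, w = Real.log (Real.sin u) - Real.log u := ⟨_, rfl⟩
  obtain ⟨ES, hES_def⟩ : ∃ w : ℝ, w = Real.log (Real.sin S) - Real.log S := ⟨_, rfl⟩
  obtain ⟨ET, hET_def⟩ : ∃ w : ℝ, w = Real.log (Real.sin T) - Real.log T := ⟨_, rfl⟩
  have hEu : |Eu| ≤ u^2 := by rw [hEu_def]; exact aux_abs_log_sin_sub_log_le hu0 hu1
  have hES : |ES| ≤ S^2 := by rw [hES_def]; exact aux_abs_log_sin_sub_log_le hS0 hS1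
  have hET : |ET| ≤ T^2 := by rw [hET_def]; exact aux_abs_log_sin_sub_log_le hT0 hT1
  have hlogu : Real.log u = Real.log z + Real.log x := by
    rw [hu_eq]; exact Real.log_mul hz0.ne' hx.ne'
  have hlogS : Real.log S = Real.log z + Real.log s := by
    rw [hS_eq]; exact Real.log_mul hz0.ne' hs0.ne'
  have hlogT : Real.log T = Real.log z + Real.log τ := by
    rw [hT_eq]; exact Real.log_mul hz0.ne' hτ0.ne'
  have h1Δ : (1:ℝ) - Δ ≠ 0 := by
    intro h; rw [sub_eq_zero] at h; linarith only [hΔ1, h]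
  have hLid : Real.log (Real.cos a) * (1/(1-Δ))
      + Real.log (Real.sin u / Real.sin S) * ((2-Δ)/(1-Δ))
      + (Real.log (Real.sin T) - Real.log (Real.sin u))
      - (Real.log x * (1/(1-Δ)) + (Real.log (1+β+x) - 2*Real.log (1+β+2*x)))
      = Real.log (Real.cos a) * (1/(1-Δ)) + (1/(1-Δ)) * Eu - ((2-Δ)/(1-Δ)) * ES + ET
        - (Δ/(1-Δ)) * Real.log s + 2*(Real.log (1+β+2*x) - Real.log s)
        + (Real.log τ - Real.log (1+β+x)) := by
    have e1 : Real.log (Real.sin u) = Real.log z + Real.log x + Eu := by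
      rw [hEu_def, hlogu]; ring
    have e2 : Real.log (Real.sin S) = Real.log z + Real.log s + ES := by
      rw [hES_def, hlogS]; ring
    have e3 : Real.log (Real.sin T) = Real.log z + Real.log τ + ET := by
      rw [hET_def, hlogT]; ring
    rw [Real.log_div hsinu.ne' hsinS.ne', e1, e2, e3]
    field_simp
    ring
  rw [hLid]
  -- bound each of the seven summands
  have hp2 : 1/(1-Δ) ≤ 2 := by
    rw [div_le_iff₀ (by linarith only [hΔ1] : (0:ℝ) < 1-Δ)]
    linarith only [hΔ4]
  have hp0 : 0 < 1/(1-Δ) := by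
    have : (0:ℝ) < 1-Δ := by linarith only [hΔ1]
    positivity
  have hq3 : (2-Δ)/(1-Δ) ≤ 3 := by
    rw [div_le_iff₀ (by linarith only [hΔ1] : (0:ℝ) < 1-Δ)]
    linarith only [hΔ4, hΔ]
  have hq0 : 0 < (2-Δ)/(1-Δ) := by
    have h1 : (0:ℝ) < 1-Δ := by linarith only [hΔ1]
    have h2 : (0:ℝ) < 2-Δ := by linarith only [hΔ1]
    positivity
  have ha2 : a^2 ≤ 16*Δ^2 := by
    nlinarith only [sq_abs a, habs, hz2Δ, abs_nonneg a, hz0]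
  have hT1b : |Real.log (Real.cos a) * (1/(1-Δ))| ≤ 32*Δ^2 := by
    rw [abs_mul, abs_of_pos hp0]
    calc |Real.log (Real.cos a)| * (1/(1-Δ)) ≤ a^2 * 2 :=
        mul_le_mul (aux_abs_log_cos_le habs1) hp2 hp0.le (sq_nonneg a)
      _ ≤ 32*Δ^2 := by linarith only [ha2]
  have hu2 : u^2 ≤ 4*Δ^2*(1/ε')^2 := by
    nlinarith only [mul_self_le_mul_self hu0.le hu_ub]
  have hT2b : |(1/(1-Δ)) * Eu| ≤ 8*Δ^2*(1/ε')^2 := by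
    rw [abs_mul, abs_of_pos hp0]
    calc (1/(1-Δ)) * |Eu| ≤ 2 * u^2 :=
        mul_le_mul hp2 hEu (abs_nonneg _) (by norm_num)
      _ ≤ 8*Δ^2*(1/ε')^2 := by linarith only [hu2]
  have hS2 : S^2 ≤ 4*Δ^2*Cs^2 := by
    nlinarith only [mul_self_le_mul_self hS0.le hS_ub]
  have hT3b : |((2-Δ)/(1-Δ)) * ES| ≤ 12*Δ^2*Cs^2 := by
    rw [abs_mul, abs_of_pos hq0]
    calc ((2-Δ)/(1-Δ)) * |ES| ≤ 3 * S^2 :=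
        mul_le_mul hq3 hES (abs_nonneg _) (by norm_num)
      _ ≤ 12*Δ^2*Cs^2 := by linarith only [hS2]
  have hT2sq : T^2 ≤ 4*Δ^2*Cs^2 := by
    nlinarith only [mul_self_le_mul_self hT0.le hT_ub]
  have hT4b : |ET| ≤ 4*Δ^2*Cs^2 := le_trans hET hT2sq
  have hΔq : Δ/(1-Δ) ≤ 2*Δ := by
    rw [div_le_iff₀ (by linarith only [hΔ1] : (0:ℝ) < 1-Δ)]
    nlinarith only [mul_le_mul_of_nonneg_left hΔ4 hΔ.le, hΔ]
  have hΔq0 : 0 ≤ Δ/(1-Δ) := by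
    have : (0:ℝ) < 1-Δ := by linarith only [hΔ1]
    positivity
  have hlogs : |Real.log s| ≤ Cls := by
    have h1 : Real.log s ≤ Real.log Cs := Real.log_le_log hs0 hs_ub
    have h2 : Real.log m ≤ Real.log s := Real.log_le_log hm hs_lb
    rw [abs_le, hCls_def]
    constructor <;> linarith only [h1, h2, hlogm, hlogCs]
  have hT5b : |(Δ/(1-Δ)) * Real.log s| ≤ 2*Δ*Cls := by
    rw [abs_mul, abs_of_nonneg hΔq0]
    calc (Δ/(1-Δ)) * |Real.log s| ≤ (2*Δ) * Cls :=
        mul_le_mul hΔq hlogs (abs_nonneg _) (by linarith only [hΔ])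
      _ = 2*Δ*Cls := by ring
  have hd6 : |(1+β+2*x) - s| ≤ lam + 36*Δ^2 := by
    rw [hs_def, show (1+β+2*x) - (2*x + (1-lam) + c) = (β - c) + lam by ring]
    calc |(β - c) + lam| ≤ |β - c| + |lam| := abs_add_le _ _
      _ = |c - β| + lam := by rw [abs_sub_comm, abs_of_pos hlam]
      _ ≤ lam + 36*Δ^2 := by linarith only [hc]
  have hmin6 : m ≤ min (1+β+2*x) s := by
    apply le_min _ hs_lb
    rw [hm_def]; linarith only [hx, hβ1]
  have hT6b : |Real.log (1+β+2*x) - Real.log s| ≤ (lam + 36*Δ^2)/m := by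
    refine le_trans (aux_abs_log_sub_log_le hb2 hs0) ?_
    exact div_le_div₀ (by positivity) hd6 hm hmin6
  have hd7 : |τ - (1+β+x)| ≤ lam + 36*Δ^2 := by
    rw [hτ_def, show (1 + x*(1-Δ) + c) - (1+β+x) = (c - β) - Δ*x by ring, hΔx]
    calc |(c-β) - lam| ≤ |c-β| + |lam| := aux_abs_sub_le _ _
      _ = |c - β| + lam := by rw [abs_of_pos hlam]
      _ ≤ lam + 36*Δ^2 := by linarith only [hc]
  have hmin7 : m ≤ min τ (1+β+x) := by
    apply le_min hτ_lb
    rw [hm_def]; linarith only [hx, hβ1]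
  have hT7b : |Real.log τ - Real.log (1+β+x)| ≤ (lam + 36*Δ^2)/m := by
    refine le_trans (aux_abs_log_sub_log_le hτ0 hb1) ?_
    exact div_le_div₀ (by positivity) hd7 hm hmin7
  -- assemble
  have htotal : |Real.log (Real.cos a) * (1/(1-Δ)) + (1/(1-Δ)) * Eu - ((2-Δ)/(1-Δ)) * ES
      + ET - (Δ/(1-Δ)) * Real.log s + 2*(Real.log (1+β+2*x) - Real.log s)
      + (Real.log τ - Real.log (1+β+x))| ≤ K*Δ := by
    have h0 := aux_abs_add7 (Real.log (Real.cos a) * (1/(1-Δ))) ((1/(1-Δ)) * Eu)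
      (((2-Δ)/(1-Δ)) * ES) ET ((Δ/(1-Δ)) * Real.log s)
      (2*(Real.log (1+β+2*x) - Real.log s)) (Real.log τ - Real.log (1+β+x))
    have h6' : |2*(Real.log (1+β+2*x) - Real.log s)| ≤ 2*((lam + 36*Δ^2)/m) := by
      rw [abs_mul, abs_of_nonneg (by norm_num : (0:ℝ) ≤ 2)]
      linarith only [hT6b]
    have hmul1 : Cs^2*Δ^2 ≤ Cs^2*Δ := mul_le_mul_of_nonneg_left hΔ2 (by positivity)
    have hmul2 : (1/ε')^2*Δ^2 ≤ (1/ε')^2*Δ := mul_le_mul_of_nonneg_left hΔ2 (by positivity)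
    have hlamb : lam ≤ Δ*(1/ε') := by
      have hh : Δ/ε' = Δ*(1/ε') := by ring
      linarith only [hlamε, hh]
    have hmul3 : (1/m)*(lam + 36*Δ^2) ≤ (1/m)*(Δ*(1/ε') + 36*Δ) := by
      apply mul_le_mul_of_nonneg_left _ (by positivity)
      linarith only [hlamb, hΔ2]
    have hdiv : (lam + 36*Δ^2)/m = (1/m)*(lam + 36*Δ^2) := by ring
    rw [hK_def]
    rw [hdiv] at hT6b h6' hT7b
    have hbr1 : (8/ε'^2)*Δ = 8*((1/ε')^2*Δ) := by ring
    have hbr2 : (3/m)*(36+1/ε')*Δ = 3*((1/m)*(Δ*(1/ε') + 36*Δ)) := by ring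
    linarith only [h0, hT1b, hT2b, hT3b, hT4b, hT5b, h6', hT7b, hmul1, hmul2, hmul3, hΔ2,
      hbr1, hbr2]
  have hKΔ : K*Δ ≤ 1 := by
    have h1 : K*Δ ≤ K*(1/K) := mul_le_mul_of_nonneg_left hΔK hK.le
    have h2 : K*(1/K) = 1 := by field_simp
    linarith only [h1, h2]
  calc |Real.exp (Real.log (Real.cos a) * (1/(1-Δ)) + (1/(1-Δ)) * Eu - ((2-Δ)/(1-Δ)) * ES
      + ET - (Δ/(1-Δ)) * Real.log s + 2*(Real.log (1+β+2*x) - Real.log s)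
      + (Real.log τ - Real.log (1+β+x))) - 1|
      ≤ |Real.log (Real.cos a) * (1/(1-Δ)) + (1/(1-Δ)) * Eu - ((2-Δ)/(1-Δ)) * ES
      + ET - (Δ/(1-Δ)) * Real.log s + 2*(Real.log (1+β+2*x) - Real.log s)
      + (Real.log τ - Real.log (1+β+x))|
        * Real.exp |Real.log (Real.cos a) * (1/(1-Δ)) + (1/(1-Δ)) * Eu - ((2-Δ)/(1-Δ)) * ES
      + ET - (Δ/(1-Δ)) * Real.log s + 2*(Real.log (1+β+2*x) - Real.log s)
      + (Real.log τ - Real.log (1+β+x))| := aux_abs_exp_sub_one_le _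
    _ ≤ (K*Δ) * Real.exp 1 := by
        apply mul_le_mul htotal (Real.exp_le_exp.mpr (le_trans htotal hKΔ))
          (Real.exp_pos _).le (by positivity)
    _ ≤ (K*Δ) * 3 := by
        have := Real.exp_one_lt_d9
        have hKΔ0 : 0 ≤ K*Δ := by positivity
        nlinarith only [this, hKΔ0]
    _ = 3*K*Δ := by ring

theorem Afun_asymptotic_small_lambda (β ε' : ℝ) (hβ : β ∈ Set.Ioo (-1 : ℝ) 1)
    (hε' : 0 < ε') :
    ∃ R : ℝ → ℝ → ℝ,
      (∀ Δ lam : ℝ, 0 < Δ → 0 < lam → lam ≤ Δ / ε' →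
        Afun (2 - Δ) β (1 - lam) =
          (lam / Δ) ^ (1 / (1 - Δ)) * (1 + β + lam / Δ) / (1 + β + 2 * lam / Δ) ^ 2 *
            (1 + R Δ lam)) ∧
      (∀ ε₁ : ℝ, 0 < ε₁ → ∃ Δ₀ > (0 : ℝ), ∀ Δ lam : ℝ, 0 < Δ → Δ < Δ₀ →
        0 < lam → lam ≤ Δ / ε' →
        |R Δ lam| ≤ ε₁ * (Δ * Real.log (1 / Δ))) := by
  obtain ⟨hβ1, hβ2⟩ := hβ
  obtain ⟨C, hC, Δ₁, hΔ₁, hkey⟩ := key_estimate hβ1 hβ2 hε'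
  refine ⟨fun Δ lam => Afun (2 - Δ) β (1 - lam) /
      ((lam / Δ) ^ (1 / (1 - Δ)) * (1 + β + lam / Δ) / (1 + β + 2 * lam / Δ) ^ 2) - 1,
    ?_, ?_⟩
  · intro Δ lam hΔ hlam hlamε
    have hx0 : 0 < lam/Δ := div_pos hlam hΔ
    have hr : 0 < (lam/Δ) ^ (1/(1-Δ)) := Real.rpow_pos_of_pos hx0 _
    have hb1 : 0 < 1 + β + lam/Δ := by linarith
    have hb2 : 0 < 1 + β + 2*lam/Δ := by
      have : 0 < 2*lam/Δ := by positivity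
      linarith
    have hM : 0 < (lam / Δ) ^ (1 / (1 - Δ)) * (1 + β + lam / Δ) / (1 + β + 2 * lam / Δ) ^ 2 := by
      positivity
    simp only []
    rw [show (1 : ℝ) + (Afun (2 - Δ) β (1 - lam) /
        ((lam / Δ) ^ (1 / (1 - Δ)) * (1 + β + lam / Δ) / (1 + β + 2 * lam / Δ) ^ 2) - 1)
      = Afun (2 - Δ) β (1 - lam) /
        ((lam / Δ) ^ (1 / (1 - Δ)) * (1 + β + lam / Δ) / (1 + β + 2 * lam / Δ) ^ 2) by ring]
    rw [mul_div_cancel₀ _ hM.ne']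
  · intro ε₁ hε₁
    refine ⟨min Δ₁ (Real.exp (-(C/ε₁))), lt_min hΔ₁ (Real.exp_pos _), ?_⟩
    intro Δ lam hΔ hΔ₀ hlam hlamε
    have h1 : Δ ≤ Δ₁ := le_of_lt (lt_of_lt_of_le hΔ₀ (min_le_left _ _))
    have h2 := hkey Δ lam hΔ h1 hlam hlamε
    have h3 : Δ < Real.exp (-(C/ε₁)) := lt_of_lt_of_le hΔ₀ (min_le_right _ _)
    have h4 : Real.log Δ < -(C/ε₁) := by
      have := Real.log_lt_log hΔ h3
      rwa [Real.log_exp] at this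
    have h6 : C/ε₁ < Real.log (1/Δ) := by
      rw [one_div, Real.log_inv]; linarith
    have h7 : C ≤ ε₁ * Real.log (1/Δ) := by
      rw [div_lt_iff₀ hε₁] at h6
      nlinarith only [h6]
    have h8 := mul_le_mul_of_nonneg_right h7 hΔ.le
    simp only []
    calc |Afun (2 - Δ) β (1 - lam) /
        ((lam / Δ) ^ (1 / (1 - Δ)) * (1 + β + lam / Δ) / (1 + β + 2 * lam / Δ) ^ 2) - 1|
        ≤ C * Δ := h2
      _ ≤ ε₁ * (Δ * Real.log (1/Δ)) := by nlinarith only [h8]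
end

section
/- Fix β ∈ (−1,1). There exists Δ₀ > 0 such that for every α = 2−Δ with 0 < Δ < Δ₀, the function φ ↦ A(φ;α,β) is strictly monotonically decreasing on the interval (−ϱ, 1). -/
open Filter Set Topology Real

lemma cos_lower {x : ℝ} (hx : 0 < x) (hx2 : x ≤ π/2) : 1 - x^2/2 < Real.cos x := by
  have hpi : (3.141592 : ℝ) < π := Real.pi_gt_d6
  have h1 : Real.sin (x/2) < x/2 := Real.sin_lt (by linarith)
  have h0 : 0 < Real.sin (x/2) := Real.sin_pos_of_pos_of_lt_pi (by linarith) (by linarith)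
  have hc : Real.cos x = 1 - 2 * Real.sin (x/2)^2 := by
    have h2 := Real.cos_two_mul' (x/2)
    have h3 := Real.sin_sq_add_cos_sq (x/2)
    have h4 : 2 * (x/2) = x := by ring
    rw [h4] at h2
    nlinarith
  nlinarith

lemma key0 {x : ℝ} (hx : 0 < x) (hx' : x ≤ π/2 + 1/100) :
    (1 - x^2/2) * Real.sin x < x * Real.cos x := by
  have hpi : (3.141592 : ℝ) < π := Real.pi_gt_d6
  have hpi2 : π < 3.15 := Real.pi_lt_d2
  rcases le_or_gt x (π/2) with hle | hgt
  · have hcos := cos_lower hx hle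
    have hsin : Real.sin x < x := Real.sin_lt hx
    have hsinpos : 0 < Real.sin x := Real.sin_pos_of_pos_of_lt_pi hx (by linarith)
    have hcosnn : 0 ≤ Real.cos x := Real.cos_nonneg_of_mem_Icc ⟨by linarith, hle⟩
    rcases le_or_gt 0 (1 - x^2/2) with hq | hq
    · nlinarith
    · nlinarith
  · have hcx : Real.cos x = - Real.sin (x - π/2) := by
      have h := Real.cos_add_pi_div_two (x - π/2)
      rw [sub_add_cancel] at h
      exact h
    have hsx : Real.sin x = Real.cos (x - π/2) := by
      have h := Real.sin_add_pi_div_two (x - π/2)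
      rw [sub_add_cancel] at h
      exact h
    set e := x - π/2 with he
    clear_value e
    have he0 : 0 < e := by linarith
    have he1 : e ≤ 1/100 := by linarith
    have hse : Real.sin e ≤ e := Real.sin_le he0.le
    have hse0 : 0 ≤ Real.sin e := Real.sin_nonneg_of_nonneg_of_le_pi he0.le (by linarith)
    have hce : 1 - e^2/2 < Real.cos e := cos_lower he0 (by linarith)
    have hce1 : Real.cos e ≤ 1 := Real.cos_le_one e
    rw [hcx, hsx]
    have hx159 : x ≤ 1.585 := by linarith
    have hxsq : (1:ℝ) - x^2/2 < -0.23 := by nlinarith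
    have hcepos : (0.99:ℝ) < Real.cos e := by nlinarith
    have hR : -(1.585 * (1/100)) ≤ x * -Real.sin e := by nlinarith
    have hL : (1 - x^2/2) * Real.cos e < -0.23 * 0.99 := by nlinarith
    nlinarith

lemma key1 {c x : ℝ} (hc : 3/4 ≤ c) (hx : 0 < x) (hx' : x ≤ π/2 + 1/100) :
    1/x - c^2*x < Real.cos x / Real.sin x := by
  have hpi : (3.141592 : ℝ) < π := Real.pi_gt_d6
  have hsin : 0 < Real.sin x := Real.sin_pos_of_pos_of_lt_pi hx (by linarith)
  have h0 := key0 hx hx'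
  have hc2 : (9:ℝ)/16 ≤ c^2 := by nlinarith
  have key1' : Real.sin x - c^2*x^2*Real.sin x < x * Real.cos x := by
    nlinarith [mul_nonneg (mul_nonneg (by nlinarith : (0:ℝ) ≤ c^2 - 1/2) (sq_nonneg x)) hsin.le]
  rw [lt_div_iff₀ hsin]
  rw [← mul_lt_mul_iff_right₀ hx]
  have hexp : x * ((1/x - c^2*x) * Real.sin x) = Real.sin x - c^2*x^2*Real.sin x := by
    field_simp
  rw [hexp]
  nlinarith

lemma slope_lemma {a x ε : ℝ} (ha : 3/4 ≤ a) (hx : 0 < x) (hx' : x ≤ π/2 + 1/100)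
    (hε : 0 < ε) (htop : ε + (a+1)*x < π) :
    (a+1)^2 * (Real.cos (ε+(a+1)*x) / Real.sin (ε+(a+1)*x))
      - a^2 * (Real.cos (ε+a*x) / Real.sin (ε+a*x)) < Real.cos x / Real.sin x := by
  set G : ℝ → ℝ := fun c => c^2 * (Real.cos (ε+c*x) / Real.sin (ε+c*x)) with hG
  set G' : ℝ → ℝ := fun c =>
    2*c * (Real.cos (ε+c*x) / Real.sin (ε+c*x)) - c^2 * x / (Real.sin (ε+c*x))^2 with hG'
  have hsθ : ∀ c ∈ Icc a (a+1), 0 < Real.sin (ε+c*x) := by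
    intro c hc
    apply Real.sin_pos_of_pos_of_lt_pi
    · have : 0 < c*x := mul_pos (by linarith [hc.1]) hx
      linarith
    · have : c*x ≤ (a+1)*x := by nlinarith [hc.2]
      linarith
  have hasG : ∀ c ∈ Icc a (a+1), HasDerivAt G (G' c) c := by
    intro c hc
    have hne : Real.sin (ε+c*x) ≠ 0 := (hsθ c hc).ne'
    have hlin : HasDerivAt (fun c : ℝ => ε + c*x) x c := by
      simpa using (hasDerivAt_mul_const x (x := c)).const_add ε
    have hsin := hlin.sin
    have hcos := hlin.cos
    have hdiv := hcos.div hsin hne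
    have hsq : HasDerivAt (fun c : ℝ => c^2) (2*c) c := by
      simpa using hasDerivAt_pow 2 c
    have := hsq.mul hdiv
    refine this.congr_deriv (Eq.symm ?_)
    have hp := Real.sin_sq_add_cos_sq (ε+c*x)
    have hnum : -Real.sin (ε+c*x) * x * Real.sin (ε+c*x) - Real.cos (ε+c*x) * (Real.cos (ε+c*x) * x)
        = -x := by linear_combination (-x) * hp
    show 2*c * (Real.cos (ε+c*x) / Real.sin (ε+c*x)) - c^2 * x / (Real.sin (ε+c*x))^2 = _
    rw [hnum]
    simp only [Pi.div_apply]
    ring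
  have hmvt := exists_hasDerivAt_eq_slope G G' (by linarith : a < a + 1)
    (fun c hc => (hasG c hc).continuousAt.continuousWithinAt)
    (fun c hc => hasG c (Ioo_subset_Icc_self hc))
  obtain ⟨ξ, hξ, hξeq⟩ := hmvt
  have hGdiff : G (a+1) - G a = G' ξ := by
    rw [hξeq]; field_simp; ring
  have hξa : 3/4 ≤ ξ := by linarith [hξ.1]
  -- bound G' ξ
  have hsθξ : 0 < Real.sin (ε+ξ*x) := hsθ ξ ⟨hξ.1.le, hξ.2.le⟩
  have hkey := key1 hξa hx hx'
  have hbound : G' ξ ≤ 1/x - ξ^2*x := by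
    have hw : ξ^2 * x / (Real.sin (ε+ξ*x))^2
        = ξ^2 * x * (1 + (Real.cos (ε+ξ*x)/Real.sin (ε+ξ*x))^2) := by
      have hp := Real.sin_sq_add_cos_sq (ε+ξ*x)
      field_simp
      linear_combination -hp
    show 2*ξ * (Real.cos (ε+ξ*x) / Real.sin (ε+ξ*x)) - ξ^2 * x / (Real.sin (ε+ξ*x))^2 ≤ _
    rw [hw]
    set w := Real.cos (ε+ξ*x)/Real.sin (ε+ξ*x) with hwdef
    clear_value w
    have hxne : x * (1/x) = 1 := by field_simp
    nlinarith [sq_nonneg (x*ξ*w - 1), hx, mul_pos hx hx]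
  have : G (a+1) - G a < Real.cos x / Real.sin x := by
    rw [hGdiff]; linarith
  simpa [hG] using this

lemma hasDerivAt_log_cos (k m φ : ℝ) (h : Real.cos (k*φ+m) ≠ 0) :
    HasDerivAt (fun y => Real.log (Real.cos (k*y+m)))
      (-(k * (Real.sin (k*φ+m) / Real.cos (k*φ+m)))) φ := by
  have hlin : HasDerivAt (fun y : ℝ => k*y+m) k φ := by
    simpa using ((hasDerivAt_id φ).const_mul k).add_const m
  have hcos := hlin.cos
  have hlog := hcos.log h
  convert hlog using 1
  ring

lemma hasDerivAt_log_sin (k m φ : ℝ) (h : Real.sin (k*φ+m) ≠ 0) :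
    HasDerivAt (fun y => Real.log (Real.sin (k*y+m)))
      (k * (Real.cos (k*φ+m) / Real.sin (k*φ+m))) φ := by
  have hlin : HasDerivAt (fun y : ℝ => k*y+m) k φ := by
    simpa using ((hasDerivAt_id φ).const_mul k).add_const m
  have hsin := hlin.sin
  have hlog := hsin.log h
  convert hlog using 1
  ring


lemma Valg (d p u v w : ℝ) (h : (1:ℝ)-d ≠ 0) :
    0 + (2-d)/(2-d-1) * (-(p/2*u) - p*(2-d)/2 * (-v)) + -((p/2)*(2-d-1)*w) - -(p/2*u)
      = (p/(2*(1-d))) * ((2-d)^2*v - (1-d)^2*w - u) := by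
  have h2 : (2-d-1 : ℝ) ≠ 0 := fun hh => h (by linear_combination hh)
  field_simp
  ring

set_option maxHeartbeats 1000000 in
lemma main_aux (Δ r β : ℝ) (hΔ0 : 0 < Δ) (hΔ1 : Δ < 1/250)
    (hr : r = varrho (2-Δ) β)
    (hs1 : -(π*Δ/2) < (2-Δ)*(π*r/2)) (hs2 : (2-Δ)*(π*r/2) < π*Δ/2) :
    StrictAntiOn (Afun (2-Δ) β) (Set.Ioo (-r) 1) := by
  have hpi : (3.141592 : ℝ) < π := Real.pi_gt_d6
  have hpi2 : π < 3.15 := Real.pi_lt_d2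
  -- bound on r itself
  have hrb1 : r < Δ := by
    rcases le_or_gt 0 r with h | h
    · have h1 : 0 ≤ (1-Δ)*(π*r/2) := by
        apply mul_nonneg (by linarith)
        nlinarith
      nlinarith
    · linarith
  have hrb2 : -Δ < r := by
    rcases le_or_gt 0 r with h | h
    · linarith
    · have h1 : (1-Δ)*(π*r/2) ≤ 0 := by
        apply mul_nonpos_of_nonneg_of_nonpos (by linarith)
        nlinarith
      nlinarith
  obtain ⟨ε, hεdef⟩ : ∃ e : ℝ, e = π*Δ/2 - (2-Δ)*(π*r/2) := ⟨_, rfl⟩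
  have hεpos : 0 < ε := by rw [hεdef]; linarith
  -- the logarithm of Afun
  obtain ⟨L, hL⟩ : ∃ L' : ℝ → ℝ, L' = fun y =>
    (1/(2-Δ-1)) * Real.log (Real.cos (π*(2-Δ)*r/2))
    + ((2-Δ)/(2-Δ-1)) * (Real.log (Real.cos (π*y/2))
        - Real.log (Real.sin (π*(2-Δ)*(y+r)/2)))
    + Real.log (Real.cos ((π/2)*((2-Δ)*r + (2-Δ-1)*y)))
    - Real.log (Real.cos (π*y/2)) := ⟨_, rfl⟩
  -- global constant positivity
  have hC : 0 < Real.cos (π*(2-Δ)*r/2) := by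
    rw [show π*(2-Δ)*r/2 = (2-Δ)*(π*r/2) by ring]
    apply Real.cos_pos_of_mem_Ioo
    constructor <;> nlinarith
  -- per-point facts
  have hfacts : ∀ φ ∈ Set.Ioo (-r) (1:ℝ), ∃ x : ℝ,
      x = π/2 - π*φ/2 ∧ 0 < x ∧ x ≤ π/2 + 1/100 ∧ ε + (2-Δ)*x < π ∧
      π*φ/2 = π/2 - x ∧ π*(2-Δ)*(φ+r)/2 = π - (ε + (2-Δ)*x) ∧
      (π/2)*((2-Δ)*r + (2-Δ-1)*φ) = π/2 - (ε + (1-Δ)*x) ∧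
      0 < Real.sin x ∧ 0 < Real.sin (ε + (2-Δ)*x) ∧ 0 < Real.sin (ε + (1-Δ)*x) ∧
      0 < Real.cos (π*φ/2) ∧ 0 < Real.sin (π*(2-Δ)*(φ+r)/2) ∧
      0 < Real.cos ((π/2)*((2-Δ)*r + (2-Δ-1)*φ)) := by
    rintro φ ⟨hφ1, hφ2⟩
    have hp1 : 0 < π*(1-φ) := mul_pos Real.pi_pos (by linarith)
    have hp2 : 0 < π*(φ+r) := mul_pos Real.pi_pos (by linarith)
    have hp3 : 0 < (2-Δ)*(π*(φ+r)) := mul_pos (by linarith) hp2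
    have hp4 : 0 < π*(φ+Δ) := mul_pos Real.pi_pos (by linarith)
    have hx0 : 0 < π/2 - π*φ/2 := by linarith
    have hx1 : π/2 - π*φ/2 ≤ π/2 + 1/100 := by nlinarith
    have hxpi : π/2 - π*φ/2 < π := by nlinarith
    have htop : ε + (2-Δ)*(π/2 - π*φ/2) < π := by rw [hεdef]; linarith [hp3]
    have hlow2 : 0 < ε + (2-Δ)*(π/2 - π*φ/2) := by
      have := mul_pos (show (0:ℝ) < 2-Δ by linarith) hx0
      linarith
    have hlow1 : 0 < ε + (1-Δ)*(π/2 - π*φ/2) := by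
      have := mul_nonneg (show (0:ℝ) ≤ 1-Δ by linarith) hx0.le
      linarith
    have htop1 : ε + (1-Δ)*(π/2 - π*φ/2) < π := by nlinarith
    have hsx : 0 < Real.sin (π/2 - π*φ/2) := Real.sin_pos_of_pos_of_lt_pi hx0 hxpi
    have hs2' : 0 < Real.sin (ε + (2-Δ)*(π/2 - π*φ/2)) :=
      Real.sin_pos_of_pos_of_lt_pi hlow2 htop
    have hs1' : 0 < Real.sin (ε + (1-Δ)*(π/2 - π*φ/2)) :=
      Real.sin_pos_of_pos_of_lt_pi hlow1 htop1
    refine ⟨π/2 - π*φ/2, rfl, hx0, hx1, htop, by ring, by rw [hεdef]; ring,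
      by rw [hεdef]; ring, hsx, hs2', hs1', ?_, ?_, ?_⟩
    · rw [show π*φ/2 = π/2 - (π/2 - π*φ/2) by ring, Real.cos_pi_div_two_sub]
      exact hsx
    · rw [show π*(2-Δ)*(φ+r)/2 = π - (ε + (2-Δ)*(π/2 - π*φ/2)) by rw [hεdef]; ring,
        Real.sin_pi_sub]
      exact hs2'
    · rw [show (π/2)*((2-Δ)*r + (2-Δ-1)*φ) = π/2 - (ε + (1-Δ)*(π/2 - π*φ/2)) by
        rw [hεdef]; ring, Real.cos_pi_div_two_sub]
      exact hs1'
  have hne1 : (2-Δ-1 : ℝ) ≠ 0 := by intro h; rw [show (2-Δ-1:ℝ) = 1-Δ by ring] at h; nlinarith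
  have hderiv : ∀ φ ∈ Set.Ioo (-r) (1:ℝ), ∃ V, HasDerivAt L V φ ∧ V < 0 := by
    rintro φ hφ
    obtain ⟨x, hxdef, hx0, hx1, htop, e1, e2, e3, hsx, hsin2, hsin1, hf, hg, hh⟩ :=
      hfacts φ hφ
    have hP : HasDerivAt (fun y => Real.log (Real.cos (π*y/2)))
        (-(π/2 * (Real.sin (π*φ/2) / Real.cos (π*φ/2)))) φ := by
      have h := hasDerivAt_log_cos (π/2) 0 φ
        (by rw [show π/2*φ+0 = π*φ/2 by ring]; exact hf.ne')
      simp only [show ∀ y:ℝ, π/2*y+0 = π*y/2 from fun y => by ring] at h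
      exact h
    have hQ : HasDerivAt (fun y => Real.log (Real.sin (π*(2-Δ)*(y+r)/2)))
        (π*(2-Δ)/2 * (Real.cos (π*(2-Δ)*(φ+r)/2) / Real.sin (π*(2-Δ)*(φ+r)/2))) φ := by
      have h := hasDerivAt_log_sin (π*(2-Δ)/2) (π*(2-Δ)*r/2) φ
        (by rw [show π*(2-Δ)/2*φ+π*(2-Δ)*r/2 = π*(2-Δ)*(φ+r)/2 by ring]; exact hg.ne')
      simp only [show ∀ y:ℝ, π*(2-Δ)/2*y+π*(2-Δ)*r/2 = π*(2-Δ)*(y+r)/2 from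
        fun y => by ring] at h
      exact h
    have hR : HasDerivAt (fun y => Real.log (Real.cos ((π/2)*((2-Δ)*r + (2-Δ-1)*y))))
        (-((π/2)*(2-Δ-1) * (Real.sin ((π/2)*((2-Δ)*r + (2-Δ-1)*φ))
          / Real.cos ((π/2)*((2-Δ)*r + (2-Δ-1)*φ))))) φ := by
      have h := hasDerivAt_log_cos ((π/2)*(2-Δ-1)) ((π/2)*((2-Δ)*r)) φ
        (by rw [show (π/2)*(2-Δ-1)*φ+(π/2)*((2-Δ)*r) = (π/2)*((2-Δ)*r + (2-Δ-1)*φ) by ring]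
            exact hh.ne')
      simp only [show ∀ y:ℝ, (π/2)*(2-Δ-1)*y+(π/2)*((2-Δ)*r) = (π/2)*((2-Δ)*r + (2-Δ-1)*y)
        from fun y => by ring] at h
      exact h
    refine ⟨0 + (2-Δ)/(2-Δ-1) * (-(π/2 * (Real.sin (π*φ/2) / Real.cos (π*φ/2)))
        - π*(2-Δ)/2 * (Real.cos (π*(2-Δ)*(φ+r)/2) / Real.sin (π*(2-Δ)*(φ+r)/2)))
      + -((π/2)*(2-Δ-1) * (Real.sin ((π/2)*((2-Δ)*r + (2-Δ-1)*φ))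
          / Real.cos ((π/2)*((2-Δ)*r + (2-Δ-1)*φ))))
      - -(π/2 * (Real.sin (π*φ/2) / Real.cos (π*φ/2))), ?_, ?_⟩
    · rw [hL]
      exact (((hasDerivAt_const φ ((1/(2-Δ-1)) * Real.log (Real.cos (π*(2-Δ)*r/2)))).add
        ((hP.sub hQ).const_mul ((2-Δ)/(2-Δ-1)))).add hR).sub hP
    ·
      have t1 : Real.sin (π*φ/2) = Real.cos x := by rw [e1, Real.sin_pi_div_two_sub]
      have t2 : Real.cos (π*φ/2) = Real.sin x := by rw [e1, Real.cos_pi_div_two_sub]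
      have t3 : Real.cos (π*(2-Δ)*(φ+r)/2) = -Real.cos (ε+(2-Δ)*x) := by
        rw [e2, Real.cos_pi_sub]
      have t4 : Real.sin (π*(2-Δ)*(φ+r)/2) = Real.sin (ε+(2-Δ)*x) := by
        rw [e2, Real.sin_pi_sub]
      have t5 : Real.sin ((π/2)*((2-Δ)*r + (2-Δ-1)*φ)) = Real.cos (ε+(1-Δ)*x) := by
        rw [e3, Real.sin_pi_div_two_sub]
      have t6 : Real.cos ((π/2)*((2-Δ)*r + (2-Δ-1)*φ)) = Real.sin (ε+(1-Δ)*x) := by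
        rw [e3, Real.cos_pi_div_two_sub]
      rw [t1, t2, t3, t4, t5, t6]
      have hslope := slope_lemma (a := 1-Δ) (x := x) (ε := ε)
        (by linarith) hx0 hx1 hεpos
        (by rw [show ((1-Δ:ℝ)+1) = 2-Δ by ring]; exact htop)
      rw [show ((1-Δ:ℝ)+1) = 2-Δ by ring] at hslope
      rw [neg_div]
      rw [Valg Δ π (Real.cos x / Real.sin x)
        (Real.cos (ε+(2-Δ)*x) / Real.sin (ε+(2-Δ)*x))
        (Real.cos (ε+(1-Δ)*x) / Real.sin (ε+(1-Δ)*x)) (by linarith)]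
      apply mul_neg_of_pos_of_neg
      · apply div_pos Real.pi_pos; linarith
      · linarith
  have hanti : StrictAntiOn L (Set.Ioo (-r) 1) := by
    apply strictAntiOn_of_deriv_neg (convex_Ioo _ _)
    · intro φ hφ
      obtain ⟨V, hV, _⟩ := hderiv φ hφ
      exact hV.continuousAt.continuousWithinAt
    · rw [interior_Ioo]
      intro φ hφ
      obtain ⟨V, hV, hVneg⟩ := hderiv φ hφ
      rw [hV.deriv]
      exact hVneg
  have hAexp : ∀ φ ∈ Set.Ioo (-r) (1:ℝ), Afun (2-Δ) β φ = Real.exp (L φ) := by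
    rintro φ hφ
    obtain ⟨x, hxdef, hx0, hx1, htop, e1, e2, e3, hsx, hsin2, hsin1, hf, hg, hh⟩ :=
      hfacts φ hφ
    rw [Afun, ← hr]
    rw [Real.rpow_def_of_pos hC, Real.rpow_def_of_pos (div_pos hf hg),
      Real.log_div hf.ne' hg.ne']
    have hlast : Real.cos ((π/2)*((2-Δ)*r + (2-Δ-1)*φ)) / Real.cos (π*φ/2)
        = Real.exp (Real.log (Real.cos ((π/2)*((2-Δ)*r + (2-Δ-1)*φ)))
            - Real.log (Real.cos (π*φ/2))) := by
      rw [Real.exp_sub, Real.exp_log hh, Real.exp_log hf]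
    rw [hlast, ← Real.exp_add, ← Real.exp_add]
    rw [hL]
    congr 1
    ring
  rintro φ₁ h1 φ₂ h2 h12
  rw [hAexp φ₁ h1, hAexp φ₂ h2]
  exact Real.exp_lt_exp.2 (hanti h1 h2 h12)

theorem Afun_strictAntiOn (β : ℝ) (hβ : β ∈ Set.Ioo (-1 : ℝ) 1) :
    ∃ Δ₀ > (0 : ℝ), ∀ Δ : ℝ, 0 < Δ → Δ < Δ₀ →
      StrictAntiOn (Afun (2 - Δ) β) (Set.Ioo (-(varrho (2 - Δ) β)) 1) := by
  obtain ⟨hβ1, hβ2⟩ := hβ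
  refine ⟨1/250, by norm_num, ?_⟩
  intro Δ hΔ hΔ'
  have hpi : (3.141592 : ℝ) < π := Real.pi_gt_d6
  have hpi2 : π < 3.15 := Real.pi_lt_d2
  have hΔ1 : Δ < 1/250 := hΔ'
  have hAdef : (2-Δ) * (π * varrho (2-Δ) β / 2)
      = Real.arctan (β * Real.tan (π * (2-Δ) / 2)) := by
    rw [varrho]
    have h1 : π * (2-Δ) ≠ 0 :=
      (mul_pos Real.pi_pos (show (0:ℝ) < 2-Δ by linarith)).ne'
    have h2 : (2-Δ : ℝ) ≠ 0 := (show (0:ℝ) < 2-Δ by linarith).ne'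
    field_simp
  have htanpos : 0 < Real.tan (π*Δ/2) := by
    apply Real.tan_pos_of_pos_of_lt_pi_div_two
    · have := mul_pos Real.pi_pos hΔ; linarith
    · nlinarith [mul_pos Real.pi_pos (show (0:ℝ) < 1-Δ by linarith)]
  have htan : Real.tan (π * (2-Δ) / 2) = -Real.tan (π*Δ/2) := by
    rw [show π*(2-Δ)/2 = π - π*Δ/2 by ring, Real.tan_pi_sub]
  have hπΔ2 : π*Δ/2 < π/2 := by
    nlinarith [mul_pos Real.pi_pos (show (0:ℝ) < 1-Δ by linarith)]
  have hπΔ0 : 0 < π*Δ/2 := by have := mul_pos Real.pi_pos hΔ; linarith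
  have hub : Real.arctan (β * Real.tan (π * (2-Δ) / 2)) < π*Δ/2 := by
    rw [htan]
    have h1 : β * -Real.tan (π*Δ/2) < Real.tan (π*Δ/2) := by
      nlinarith [mul_pos htanpos (show (0:ℝ) < 1+β by linarith)]
    have h2 := Real.arctan_strictMono h1
    rwa [Real.arctan_tan (by linarith) hπΔ2] at h2
  have hlb : -(π*Δ/2) < Real.arctan (β * Real.tan (π * (2-Δ) / 2)) := by
    rw [htan]
    have h1 : Real.tan (-(π*Δ/2)) < β * -Real.tan (π*Δ/2) := by
      rw [Real.tan_neg]
      nlinarith [mul_pos htanpos (show (0:ℝ) < 1-β by linarith)]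
    have h2 := Real.arctan_strictMono h1
    rwa [Real.arctan_tan (by linarith) (by linarith)] at h2
  exact main_aux Δ (varrho (2-Δ) β) β hΔ hΔ' rfl (by rw [hAdef]; exact hlb)
    (by rw [hAdef]; exact hub)
end
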